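/- Let {(r_i,s_i) : 1 ≤ i ≤ m} and {(u_j,v_j) : 1 ≤ j ≤ n} be two finite families of open intervals with dyadic rational endpoints contained in [0,1] such that ⋃_{i=1}^m (r_i,s_i) = ⋃_{j=1}^n (u_j,v_j). Then the subgroups of Thompson's group F generated by the F_{[r_i,s_i]} and by the F_{[u_j,v_j]} coincide: ⟨F_{[r_i,s_i]} : 1 ≤ i ≤ m⟩ = ⟨F_{[u_j,v_j]} : 1 ≤ j ≤ n⟩. -/

import Mathlib

noncomputable section

/-- A dyadic rational real number. -/
def IsDyadic (x : ℝ) : Prop := ∃ a : ℤ, ∃ n : ℕ, x = (a : ℝ) / 2 ^ n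

/-- `f` restricted to `[p,q]` is a Thompson-like map onto `[r,s]`: piecewise linear with
finitely many breakpoints, all breakpoints dyadic, all slopes integer powers of 2. -/
def ThompsonLike (p q r s : ℝ) (f : ℝ → ℝ) : Prop :=
  f p = r ∧ f q = s ∧
  ∃ n : ℕ, 0 < n ∧ ∃ x : ℕ → ℝ,
    x 0 = p ∧ x n = q ∧
    (∀ i, i < n → x i < x (i + 1)) ∧
    (∀ i, i ≤ n → IsDyadic (x i)) ∧
    (∀ i, i < n → ∃ k : ℤ, ∀ t ∈ Set.Icc (x i) (x (i + 1)),
      f t = f (x i) + (2 : ℝ) ^ k * (t - x i))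

/-- Membership in `F_{[p,q]}`, realised as permutations of `ℝ` that are Thompson-like
self-maps of `[p,q]` and the identity elsewhere. -/
def InF (p q : ℝ) (g : Equiv.Perm ℝ) : Prop :=
  ThompsonLike p q p q g ∧ ∀ x : ℝ, x ∉ Set.Icc p q → g x = x

/-- The circle `S¹ = ℝ/ℤ`. -/
abbrev Circle1 := AddCircle (1 : ℝ)

instance : Fact ((0 : ℝ) < 1) := ⟨one_pos⟩

/-- A dyadic point of the circle. -/
def IsDyadicC (x : Circle1) : Prop := ∃ t : ℝ, IsDyadic t ∧ x = (t : Circle1)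

/-- Membership in Thompson's group `T`, realised as permutations of the circle:
piecewise linear with finitely many breakpoints, all breakpoints dyadic (hence
preserving the dyadic points), and all slopes integer powers of 2. -/
def InT (g : Equiv.Perm Circle1) : Prop :=
  ∃ n : ℕ, 0 < n ∧ ∃ x y : ℕ → ℝ,
    x n = x 0 + 1 ∧
    (∀ i, i < n → x i < x (i + 1)) ∧
    (∀ i, i ≤ n → IsDyadic (x i)) ∧
    (∀ i, i < n → IsDyadic (y i)) ∧
    (∀ i, i < n → ∃ k : ℤ, ∀ t ∈ Set.Icc (x i) (x (i + 1)),
      g ((t : ℝ) : Circle1) = (((y i + (2 : ℝ) ^ k * (t - x i)) : ℝ) : Circle1))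

/-- Membership in `T_{[r,s]}`: elements of `T` that fix pointwise the complement of the
open arc `(r,s)` (arcs described by real lifts with `r < s ≤ r + 1`). -/
def InTArc (r s : ℝ) (g : Equiv.Perm Circle1) : Prop :=
  InT g ∧ ∀ t : ℝ, t ∈ Set.Icc s (r + 1) → g ((t : ℝ) : Circle1) = ((t : ℝ) : Circle1)

/-- The open arc `(r,s)` of the circle, described by real lifts. -/
def openArc (r s : ℝ) : Set Circle1 := {p | ∃ t : ℝ, r < t ∧ t < s ∧ p = (t : Circle1)}

/-- Rotation of the circle by `a`. -/
def rotC (a : ℝ) : Equiv.Perm Circle1 := Equiv.addRight ((a : ℝ) : Circle1)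

/-- The standard generator `x₀` of `F` as a map `[0,1] → [0,1]` (identity off `[0,1]`). -/
def x0fun : ℝ → ℝ := fun t =>
  if t < 0 then t else if t ≤ 1/4 then 2 * t else if t ≤ 1/2 then t + 1/4
    else if t ≤ 1 then t / 2 + 1/2 else t

/-- The standard generator `x₁` of `F` as a map `[0,1] → [0,1]` (identity off `[0,1]`). -/
def x1fun : ℝ → ℝ := fun t =>
  if t ≤ 1/2 then t else if t ≤ 5/8 then 2 * t - 1/2 else if t ≤ 3/4 then t + 1/8
    else if t ≤ 1 then t / 2 + 1/2 else t

/-- The element `ζ` as a map `[0,1] → [0,1]` (identity off `[0,1]`). -/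
def zetaFun : ℝ → ℝ := fun t =>
  if t < 0 then t else if t ≤ 1/4 then 2 * t else if t ≤ 3/4 then t / 2 + 3/8 else t

/-- A lift `[0,1] → [1/2,3/2]` of the order-3 rotation-like element
`α = (0,10,11) ↦ (10,11,0)` of `T`. -/
def alpha3Fun : ℝ → ℝ := fun t =>
  if t ≤ 1/2 then t / 2 + 1/2 else if t ≤ 3/4 then t + 1/4 else 2 * t - 1/2



lemma IsDyadic.add {x y : ℝ} (hx : IsDyadic x) (hy : IsDyadic y) : IsDyadic (x + y) := by
  obtain ⟨a, n, rfl⟩ := hx; obtain ⟨b, m, rfl⟩ := hy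
  refine ⟨a * 2 ^ m + b * 2 ^ n, n + m, ?_⟩
  have h1 : ((2:ℝ)) ^ n ≠ 0 := by positivity
  have h2 : ((2:ℝ)) ^ m ≠ 0 := by positivity
  rw [pow_add]
  push_cast
  field_simp

lemma IsDyadic.neg {x : ℝ} (hx : IsDyadic x) : IsDyadic (-x) := by
  obtain ⟨a, n, rfl⟩ := hx; exact ⟨-a, n, by push_cast; ring⟩

lemma IsDyadic.sub {x y : ℝ} (hx : IsDyadic x) (hy : IsDyadic y) : IsDyadic (x - y) := by
  simpa [sub_eq_add_neg] using hx.add hy.neg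

lemma IsDyadic.zpow_mul {x : ℝ} (k : ℤ) (hx : IsDyadic x) : IsDyadic ((2:ℝ) ^ k * x) := by
  obtain ⟨a, n, rfl⟩ := hx
  rcases k with K | K
  · refine ⟨a * 2 ^ K, n, ?_⟩
    rw [show Int.ofNat K = (K : ℤ) from rfl, zpow_natCast]
    push_cast
    ring
  · refine ⟨a, n + (K + 1), ?_⟩
    have h1 : ((2:ℝ)) ^ n ≠ 0 := by positivity
    have h2 : ((2:ℝ)) ^ (K+1) ≠ 0 := by positivity
    rw [zpow_negSucc, pow_add]
    field_simp
    rw [pow_add]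
    ring

lemma IsDyadic.int (z : ℤ) : IsDyadic (z : ℝ) := ⟨z, 0, by norm_num⟩

lemma IsDyadic.zero : IsDyadic 0 := ⟨0, 0, by norm_num⟩
lemma IsDyadic.one : IsDyadic 1 := ⟨1, 0, by norm_num⟩

lemma exists_dyadic_btwn {a b : ℝ} (hab : a < b) : ∃ c, IsDyadic c ∧ a < c ∧ c < b := by
  obtain ⟨n, hn⟩ := pow_unbounded_of_one_lt ((b - a)⁻¹) (by norm_num : (1:ℝ) < 2)
  have h2 : (0:ℝ) < 2 ^ n := by positivity
  have hlt : 1 < (b - a) * 2 ^ n := by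
    have hba : 0 < b - a := by linarith
    calc (1:ℝ) = (b - a) * (b-a)⁻¹ := by field_simp
    _ < (b - a) * 2 ^ n := by exact mul_lt_mul_of_pos_left hn hba
  refine ⟨(⌊a * 2 ^ n⌋ + 1) / 2 ^ n, ⟨⌊a * 2 ^ n⌋ + 1, n, by push_cast; ring⟩, ?_, ?_⟩
  · rw [lt_div_iff₀ h2]; push_cast; exact Int.lt_floor_add_one _
  · rw [div_lt_iff₀ h2]
    have := Int.floor_le (a * 2 ^ n)
    push_cast
    nlinarith [hlt, this]


/-- `ThompsonLike` with explicit data. -/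
structure TLd (p q r s : ℝ) (f : ℝ → ℝ) (n : ℕ) (x : ℕ → ℝ) : Prop where
  map_p : f p = r
  map_q : f q = s
  npos : 0 < n
  x_zero : x 0 = p
  x_last : x n = q
  x_mono : ∀ i, i < n → x i < x (i + 1)
  x_dyadic : ∀ i, i ≤ n → IsDyadic (x i)
  pieces : ∀ i, i < n → ∃ k : ℤ, ∀ t ∈ Set.Icc (x i) (x (i + 1)),
      f t = f (x i) + (2 : ℝ) ^ k * (t - x i)

lemma tl_iff {p q r s f} : ThompsonLike p q r s f ↔ ∃ n x, TLd p q r s f n x := by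
  constructor
  · rintro ⟨h1, h2, n, hn, x, h3, h4, h5, h6, h7⟩
    exact ⟨n, x, h1, h2, hn, h3, h4, h5, h6, h7⟩
  · rintro ⟨n, x, h⟩
    exact ⟨h.map_p, h.map_q, n, h.npos, x, h.x_zero, h.x_last, h.x_mono, h.x_dyadic, h.pieces⟩

namespace TLd

variable {p q r s : ℝ} {f : ℝ → ℝ} {n : ℕ} {x : ℕ → ℝ} (h : TLd p q r s f n x)

include h

lemma xle : ∀ {i j}, i ≤ j → j ≤ n → x i ≤ x j := by
  intro i j hij hjn
  induction hij with
  | refl => exact le_refl _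
  | step h5 ih => exact le_of_lt (lt_of_le_of_lt (ih (by omega)) (h.x_mono _ (by omega)))

lemma xlt : ∀ {i j}, i < j → j ≤ n → x i < x j := by
  intro i j hij hjn
  exact lt_of_lt_of_le (h.x_mono i (by omega)) (h.xle hij hjn)

lemma ppq : p < q := by
  have := h.xlt h.npos (le_refl n)
  rwa [h.x_zero, h.x_last] at this

lemma fx_lt : ∀ {i j}, i < j → j ≤ n → f (x i) < f (x j) := by
  have step1 : ∀ i, i < n → f (x i) < f (x (i+1)) := by
    intro i hi
    obtain ⟨k, hk⟩ := h.pieces i hi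
    have hx := h.x_mono i hi
    have := hk (x (i+1)) ⟨le_of_lt hx, le_refl _⟩
    have hpos : (0:ℝ) < (2:ℝ) ^ k := zpow_pos (by norm_num) k
    nlinarith
  intro i j hij hjn
  induction hij with
  | refl => exact step1 _ (by omega)
  | step h5 ih =>
    exact lt_trans (ih (by omega)) (step1 _ (by omega))

lemma fx_le : ∀ {i j}, i ≤ j → j ≤ n → f (x i) ≤ f (x j) := by
  intro i j hij hjn
  rcases eq_or_lt_of_le hij with rfl | hlt
  · exact le_refl _
  · exact le_of_lt (h.fx_lt hlt hjn)

lemma locate {t : ℝ} (h1 : p ≤ t) (h2 : t < q) : ∃ i, i < n ∧ x i ≤ t ∧ t < x (i + 1) := by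
  classical
  set i := Nat.findGreatest (fun i => x i ≤ t) n with hi
  have h0 : x 0 ≤ t := by rw [h.x_zero]; exact h1
  have hspec : x i ≤ t := by rw [hi]; exact Nat.findGreatest_spec (P := fun i => x i ≤ t) (Nat.zero_le n) h0
  have hin : i ≠ n := by
    intro hh
    rw [hh, h.x_last] at hspec; linarith
  have hile : i ≤ n := Nat.findGreatest_le n
  have hiln : i < n := by omega
  refine ⟨i, hiln, hspec, ?_⟩
  by_contra hcon
  push_neg at hcon
  have h9 := Nat.le_findGreatest (P := fun j => x j ≤ t) (n := n) (m := i+1) (by omega) hcon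
  rw [← hi] at h9
  omega

lemma locate' {t : ℝ} (h1 : p ≤ t) (h2 : t ≤ q) : ∃ i, i < n ∧ x i ≤ t ∧ t ≤ x (i + 1) := by
  rcases lt_or_eq_of_le h2 with h2 | rfl
  · obtain ⟨i, hi, ha, hb⟩ := h.locate h1 h2
    exact ⟨i, hi, ha, le_of_lt hb⟩
  · refine ⟨n - 1, by have := h.npos; omega, ?_, ?_⟩
    · rw [← h.x_last]; exact h.xle (by omega) (le_refl _)
    · rw [← h.x_last]
      have : n - 1 + 1 = n := by have := h.npos; omega
      rw [this]

lemma strictMonoOn : StrictMonoOn f (Set.Icc p q) := by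
  rintro a ⟨ha1, ha2⟩ b ⟨hb1, hb2⟩ hab
  obtain ⟨i, hi, hxa, hax⟩ := h.locate ha1 (lt_of_lt_of_le hab hb2)
  obtain ⟨k, hk⟩ := h.pieces i hi
  have hpos : (0:ℝ) < (2:ℝ) ^ k := zpow_pos (by norm_num) k
  by_cases hb' : b ≤ x (i + 1)
  · have e1 := hk a ⟨hxa, le_of_lt hax⟩
    have e2 := hk b ⟨le_trans hxa (le_of_lt hab), hb'⟩
    nlinarith
  · push_neg at hb'
    obtain ⟨i', hi', hxb, hbx⟩ := h.locate' (le_trans ha1 (le_of_lt hab)) hb2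
    have hii : i + 1 ≤ i' := by
      by_contra hcon
      push_neg at hcon
      have : x (i' + 1) ≤ x (i + 1) := h.xle (by omega) (by omega)
      linarith
    have e1 := hk a ⟨hxa, le_of_lt hax⟩
    have e2 := hk (x (i+1)) ⟨le_of_lt (h.x_mono i hi), le_refl _⟩
    have l1 : f a < f (x (i+1)) := by nlinarith
    have l2 : f (x (i+1)) ≤ f (x i') := h.fx_le hii (by omega)
    obtain ⟨k', hk'⟩ := h.pieces i' hi'
    have e3 := hk' b ⟨hxb, hbx⟩
    have hpos' : (0:ℝ) < (2:ℝ) ^ k' := zpow_pos (by norm_num) k'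
    have l3 : f (x i') ≤ f b := by nlinarith
    linarith

lemma monotoneOn : MonotoneOn f (Set.Icc p q) := h.strictMonoOn.monotoneOn

lemma mapsTo {t : ℝ} (ht : t ∈ Set.Icc p q) : f t ∈ Set.Icc r s := by
  constructor
  · rw [← h.map_p]
    exact h.monotoneOn ⟨le_refl _, le_of_lt h.ppq⟩ ht ht.1
  · rw [← h.map_q]
    exact h.monotoneOn ht ⟨le_of_lt h.ppq, le_refl _⟩ ht.2

lemma rls : r < s := by
  rw [← h.map_p, ← h.map_q, ← h.x_zero, ← h.x_last]
  exact h.fx_lt h.npos (le_refl _)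

lemma val_dyadic (hr : IsDyadic r) : ∀ i, i ≤ n → IsDyadic (f (x i)) := by
  intro i
  induction i with
  | zero => intro _; rw [h.x_zero, h.map_p]; exact hr
  | succ i ih =>
    intro hi
    obtain ⟨k, hk⟩ := h.pieces i (by omega)
    have := hk (x (i+1)) ⟨le_of_lt (h.x_mono i (by omega)), le_refl _⟩
    rw [this]
    exact (ih (by omega)).add (((h.x_dyadic (i+1) hi).sub (h.x_dyadic i (by omega))).zpow_mul k)

lemma img_dyadic (hr : IsDyadic r) {t : ℝ} (ht : t ∈ Set.Icc p q) (htd : IsDyadic t) :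
    IsDyadic (f t) := by
  obtain ⟨i, hi, hxa, hax⟩ := h.locate' ht.1 ht.2
  obtain ⟨k, hk⟩ := h.pieces i hi
  rw [hk t ⟨hxa, hax⟩]
  exact (h.val_dyadic hr i (by omega)).add ((htd.sub (h.x_dyadic i (by omega))).zpow_mul k)

lemma surj (hr : IsDyadic r) {y : ℝ} (hy : y ∈ Set.Icc r s) :
    ∃ t ∈ Set.Icc p q, f t = y ∧ (IsDyadic y → IsDyadic t) := by
  have h0 : f (x 0) ≤ y := by rw [h.x_zero, h.map_p]; exact hy.1
  classical
  set i := Nat.findGreatest (fun i => f (x i) ≤ y) n with hidef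
  have hspec : f (x i) ≤ y := by rw [hidef]; exact Nat.findGreatest_spec (P := fun i => f (x i) ≤ y) (Nat.zero_le n) h0
  have hile : i ≤ n := Nat.findGreatest_le n
  clear_value i
  have hin : i < n ∨ (i = n ∧ y = s) := by
    rcases eq_or_lt_of_le hile with he | h'
    · right
      refine ⟨he, ?_⟩
      rw [he, h.x_last, h.map_q] at hspec
      linarith [hy.2]
    · left; exact h'
  rcases hin with hin | ⟨hie, hys⟩
  · have hnext : y < f (x (i+1)) := by
      by_contra hcon
      push_neg at hcon
      have h9 := Nat.le_findGreatest (P := fun j => f (x j) ≤ y) (n := n) (m := i+1) (by omega) hcon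
      rw [← hidef] at h9
      omega
    obtain ⟨k, hk⟩ := h.pieces i hin
    have hpos : (0:ℝ) < (2:ℝ) ^ k := zpow_pos (by norm_num) k
    have hpos' : (0:ℝ) < (2:ℝ) ^ (-k) := zpow_pos (by norm_num) (-k)
    set t := x i + (2:ℝ) ^ (-k) * (y - f (x i)) with htdef
    have hkk : (2:ℝ) ^ k * ((2:ℝ) ^ (-k) * (y - f (x i))) = y - f (x i) := by
      rw [← mul_assoc, ← zpow_add₀ (by norm_num : (2:ℝ) ≠ 0)]
      simp
    have hts : t - x i = (2:ℝ) ^ (-k) * (y - f (x i)) := by rw [htdef]; ring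
    have h1 : (2:ℝ) ^ k * (t - x i) = y - f (x i) := by rw [hts, hkk]
    have ht1 : x i ≤ t := by
      have : (0:ℝ) ≤ (2:ℝ) ^ (-k) * (y - f (x i)) :=
        mul_nonneg (le_of_lt hpos') (by linarith)
      linarith
    have e2 := hk (x (i+1)) ⟨le_of_lt (h.x_mono i hin), le_refl _⟩
    have ht2 : t ≤ x (i+1) := by
      have h2 : (2:ℝ) ^ k * (t - x i) < (2:ℝ) ^ k * (x (i+1) - x i) := by
        rw [h1]; linarith
      have := (mul_lt_mul_iff_right₀ hpos).mp h2
      linarith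
    have hft : f t = y := by
      rw [hk t ⟨ht1, ht2⟩, h1]
      ring
    refine ⟨t, ⟨?_, ?_⟩, hft, ?_⟩
    · rw [← h.x_zero]; exact le_trans (h.xle (by omega) (by omega)) ht1
    · rw [← h.x_last]; exact le_trans ht2 (h.xle (by omega) (le_refl _))
    · intro hyd
      rw [htdef]
      exact (h.x_dyadic i (by omega)).add ((hyd.sub (h.val_dyadic hr i (by omega))).zpow_mul (-k))
  · refine ⟨q, ⟨le_of_lt h.ppq, le_refl _⟩, by rw [h.map_q, hys], fun _ => ?_⟩
    rw [← h.x_last]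
    exact h.x_dyadic n (le_refl _)

end TLd

namespace TLd

variable {p q r s : ℝ} {f : ℝ → ℝ} {n : ℕ} {x : ℕ → ℝ} (h : TLd p q r s f n x)

include h

lemma x_mem {i : ℕ} (hi : i ≤ n) : x i ∈ Set.Icc p q := by
  constructor
  · rw [← h.x_zero]; exact h.xle (by omega) hi
  · rw [← h.x_last]; exact h.xle hi (le_refl _)

lemma piece_subset {i : ℕ} (hi : i < n) : Set.Icc (x i) (x (i+1)) ⊆ Set.Icc p q := by
  intro t ⟨ht1, ht2⟩
  constructor
  · exact le_trans (h.x_mem (by omega)).1 ht1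
  · exact le_trans ht2 (h.x_mem (by omega : i + 1 ≤ n)).2

lemma congr {g : ℝ → ℝ} (hfg : ∀ t ∈ Set.Icc p q, g t = f t) : TLd p q r s g n x := by
  have hq : p ≤ q := le_of_lt h.ppq
  refine ⟨?_, ?_, h.npos, h.x_zero, h.x_last, h.x_mono, h.x_dyadic, ?_⟩
  · rw [hfg p ⟨le_refl _, hq⟩]; exact h.map_p
  · rw [hfg q ⟨hq, le_refl _⟩]; exact h.map_q
  · intro i hi
    obtain ⟨k, hk⟩ := h.pieces i hi
    refine ⟨k, fun t ht => ?_⟩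
    rw [hfg t (h.piece_subset hi ht), hfg (x i) (h.piece_subset hi ⟨le_refl _, le_of_lt (h.x_mono i hi)⟩)]
    exact hk t ht

lemma drop_first (hn : 2 ≤ n) :
    TLd (x 1) q (f (x 1)) s f (n - 1) (fun i => x (i + 1)) := by
  refine ⟨rfl, h.map_q, by omega, rfl, ?_, ?_, ?_, ?_⟩
  · show x (n - 1 + 1) = q
    rw [show n - 1 + 1 = n by omega]; exact h.x_last
  · intro i hi; exact h.x_mono (i+1) (by omega)
  · intro i hi; exact h.x_dyadic (i+1) (by omega)
  · intro i hi; exact h.pieces (i+1) (by omega)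

lemma shorten_first {d : ℝ} (hd1 : p < d) (hd2 : d < x 1) (hdy : IsDyadic d) :
    TLd d q (f d) s f n (fun i => if i = 0 then d else x i) := by
  have hnn : n ≠ 0 := by have := h.npos; omega
  refine ⟨rfl, h.map_q, h.npos, by simp, by simp [hnn]; exact h.x_last, ?_, ?_, ?_⟩
  · intro i hi
    rcases Nat.eq_zero_or_pos i with rfl | hpos
    · simpa using hd2
    · simp only [if_neg (by omega : i ≠ 0), if_neg (by omega : i + 1 ≠ 0)]
      exact h.x_mono i hi
  · intro i hi
    rcases Nat.eq_zero_or_pos i with rfl | hpos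
    · simpa using hdy
    · simp only [if_neg (by omega : i ≠ 0)]
      exact h.x_dyadic i hi
  · intro i hi
    rcases Nat.eq_zero_or_pos i with rfl | hpos
    · obtain ⟨k, hk⟩ := h.pieces 0 h.npos
      refine ⟨k, fun t ht => ?_⟩
      simp only [Nat.zero_add, if_pos rfl, if_neg one_ne_zero, reduceIte] at ht ⊢
      have hdicc : d ∈ Set.Icc (x 0) (x 1) := ⟨by rw [h.x_zero]; exact le_of_lt hd1, le_of_lt hd2⟩
      have hticc : t ∈ Set.Icc (x 0) (x 1) := ⟨le_trans hdicc.1 ht.1, ht.2⟩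
      have e1 := hk t hticc
      have e2 := hk d hdicc
      rw [e1, e2]; ring
    · obtain ⟨k, hk⟩ := h.pieces i hi
      refine ⟨k, fun t ht => ?_⟩
      simp only [if_neg (by omega : i ≠ 0), if_neg (by omega : i + 1 ≠ 0)] at ht ⊢
      exact hk t ht

end TLd

lemma ThompsonLike.prepend {d q w s : ℝ} {f : ℝ → ℝ} (h : ThompsonLike d q w s f) {p : ℝ}
    (hpd : p < d) (hp : IsDyadic p)
    (haff : ∃ K : ℤ, ∀ t ∈ Set.Icc p d, f t = f p + (2:ℝ) ^ K * (t - p)) :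
    ThompsonLike p q (f p) s f := by
  obtain ⟨n, x, hd⟩ := tl_iff.mp h
  refine tl_iff.mpr ⟨n + 1, fun i => if i = 0 then p else x (i - 1), rfl, hd.map_q, by omega,
    by simp, ?_, ?_, ?_, ?_⟩
  · simp only [if_neg (by omega : n + 1 ≠ 0), Nat.add_sub_cancel]
    exact hd.x_last
  · intro i hi
    rcases Nat.eq_zero_or_pos i with rfl | hpos
    · simp only [if_pos rfl, if_neg one_ne_zero]
      rw [show (1:ℕ) - 1 = 0 from rfl, hd.x_zero]
      exact hpd
    · simp only [if_neg (by omega : i ≠ 0), if_neg (by omega : i + 1 ≠ 0)]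
      rw [show i + 1 - 1 = (i - 1) + 1 by omega]
      exact hd.x_mono (i-1) (by omega)
  · intro i hi
    rcases Nat.eq_zero_or_pos i with rfl | hpos
    · simpa using hp
    · simp only [if_neg (by omega : i ≠ 0)]
      exact hd.x_dyadic (i-1) (by omega)
  · intro i hi
    rcases Nat.eq_zero_or_pos i with rfl | hpos
    · obtain ⟨K, hK⟩ := haff
      refine ⟨K, fun t ht => ?_⟩
      simp only [if_pos rfl, if_neg one_ne_zero] at ht ⊢
      rw [show (1:ℕ) - 1 = 0 from rfl, hd.x_zero] at ht
      exact hK t ht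
    · simp only [if_neg (by omega : i ≠ 0), if_neg (by omega : i + 1 ≠ 0)] at *
      rw [show i + 1 - 1 = (i - 1) + 1 by omega]
      exact hd.pieces (i-1) (by omega)

lemma tl_single {a b : ℝ} {f : ℝ → ℝ} (hab : a < b) (ha : IsDyadic a) (hb : IsDyadic b) (k : ℤ)
    (hf : ∀ t ∈ Set.Icc a b, f t = f a + (2:ℝ) ^ k * (t - a)) :
    ThompsonLike a b (f a) (f b) f := by
  refine tl_iff.mpr ⟨1, fun i => if i = 0 then a else b, rfl, rfl, one_pos, by simp,
    by simp, ?_, ?_, ?_⟩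
  · intro i hi
    simp only [show i = 0 by omega]
    simpa using hab
  · intro i hi
    rcases Nat.eq_zero_or_pos i with rfl | hpos
    · simpa using ha
    · simpa [if_neg (by omega : i ≠ 0)] using hb
  · intro i hi
    refine ⟨k, fun t ht => ?_⟩
    simp only [show i = 0 by omega, if_pos rfl, if_neg one_ne_zero] at ht ⊢
    exact hf t ht

lemma tl_id {a b : ℝ} (hab : a < b) (ha : IsDyadic a) (hb : IsDyadic b) :
    ThompsonLike a b a b (fun t => t) := by
  have := tl_single (f := fun t : ℝ => t) hab ha hb 0 (fun t _ => by simp)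
  simpa using this

lemma tl_restrict_left : ∀ {n : ℕ} {p q r s : ℝ} {f : ℝ → ℝ} {x : ℕ → ℝ},
    TLd p q r s f n x → ∀ {c : ℝ}, p < c → c ≤ q → IsDyadic c → ThompsonLike p c r (f c) f := by
  intro n
  induction n using Nat.strong_induction_on with
  | _ n IH =>
    intro p q r s f x h c hc1 hc2 hcd
    by_cases hcx : c ≤ x 1
    · have hpiece := h.pieces 0 h.npos
      obtain ⟨k, hk⟩ := hpiece
      have := tl_single (f := f) hc1 (by rw [← h.x_zero]; exact h.x_dyadic 0 (by omega)) hcd k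
        (fun t ht => by
          have h0 : t ∈ Set.Icc (x 0) (x (0+1)) := by
            rw [h.x_zero]; exact ⟨ht.1, le_trans ht.2 hcx⟩
          have := hk t h0
          rw [h.x_zero] at this
          exact this)
      rwa [h.map_p] at this
    · push_neg at hcx
      have hn2 : 2 ≤ n := by
        by_contra hcon
        have hn1 : n = 1 := by have := h.npos; omega
        rw [← hn1] at hcx
        rw [h.x_last] at hcx
        linarith
      have hx1q : x 1 < q := by
        rw [← h.x_last]; exact h.xlt (by omega) (le_refl _)
      have h' := h.drop_first hn2
      have htl : ThompsonLike (x 1) c (f (x 1)) (f c) f :=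
        IH (n-1) (by omega) h' hcx hc2 hcd
      obtain ⟨k, hk⟩ := h.pieces 0 h.npos
      have hres := htl.prepend (p := p) (by rw [← h.x_zero]; exact h.x_mono 0 h.npos)
        (by rw [← h.x_zero]; exact h.x_dyadic 0 (by omega))
        ⟨k, fun t ht => by
          have h0 : t ∈ Set.Icc (x 0) (x (0+1)) := by rw [h.x_zero]; exact ht
          have := hk t h0
          rw [h.x_zero] at this
          exact this⟩
      rwa [h.map_p] at hres

lemma tl_restrict_right : ∀ {n : ℕ} {p q r s : ℝ} {f : ℝ → ℝ} {x : ℕ → ℝ},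
    TLd p q r s f n x → ∀ {c : ℝ}, p < c → c < q → IsDyadic c → ThompsonLike c q (f c) s f := by
  intro n
  induction n using Nat.strong_induction_on with
  | _ n IH =>
    intro p q r s f x h c hc1 hc2 hcd
    rcases lt_trichotomy c (x 1) with hcx | hcx | hcx
    · exact tl_iff.mpr ⟨n, _, h.shorten_first hc1 hcx hcd⟩
    · have hn2 : 2 ≤ n := by
        by_contra hcon
        have hn1 : n = 1 := by have := h.npos; omega
        rw [hcx, ← hn1, h.x_last] at hc2
        exact lt_irrefl _ hc2
      have := h.drop_first hn2
      rw [← hcx] at this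
      exact tl_iff.mpr ⟨n - 1, _, this⟩
    · have hn2 : 2 ≤ n := by
        by_contra hcon
        have hn1 : n = 1 := by have := h.npos; omega
        rw [← hn1, h.x_last] at hcx
        linarith
      exact IH (n-1) (by omega) (h.drop_first hn2) hcx hc2 hcd

lemma tl_glue : ∀ {n : ℕ} {p c q r w s : ℝ} {f1 f2 f : ℝ → ℝ} {x : ℕ → ℝ},
    TLd p c r w f1 n x → ThompsonLike c q w s f2 →
    (∀ t ∈ Set.Icc p c, f t = f1 t) → (∀ t ∈ Set.Icc c q, f t = f2 t) →
    ThompsonLike p q r s f := by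
  intro n
  induction n using Nat.strong_induction_on with
  | _ n IH =>
    intro p c q r w s f1 f2 f x h1 h2 hag1 hag2
    obtain ⟨m, y, h2d⟩ := tl_iff.mp h2
    have hcq : c < q := h2d.ppq
    have hpc : p < c := h1.ppq
    have hfp : f p = r := by
      rw [hag1 p ⟨le_refl _, le_of_lt hpc⟩]; exact h1.map_p
    rcases lt_or_ge 1 n with hn2 | hn1
    · -- peel first piece of f1
      have hx1c : x 1 < c := by rw [← h1.x_last]; exact h1.xlt (by omega) (le_refl _)
      have htl : ThompsonLike (x 1) q (f1 (x 1)) s f :=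
        IH (n-1) (by omega) (h1.drop_first hn2) h2
          (fun t ht => hag1 t ⟨le_trans (h1.x_mem (by omega : 1 ≤ n)).1 ht.1, ht.2⟩) hag2
      obtain ⟨k, hk⟩ := h1.pieces 0 h1.npos
      have hprep := htl.prepend (p := p) (by rw [← h1.x_zero]; exact h1.x_mono 0 h1.npos)
        (by rw [← h1.x_zero]; exact h1.x_dyadic 0 (by omega))
        ⟨k, fun t ht => by
          have hticc : t ∈ Set.Icc p c := ⟨ht.1, le_trans ht.2 (le_of_lt hx1c)⟩
          have h0 : t ∈ Set.Icc (x 0) (x (0+1)) := by rw [h1.x_zero]; exact ht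
          rw [hag1 t hticc, hag1 p ⟨le_refl _, le_of_lt hpc⟩]
          have := hk t h0
          rw [h1.x_zero] at this
          exact this⟩
      rwa [hfp] at hprep
    · -- n = 1 : f1 is a single affine piece on [p, c]
      have hn1' : n = 1 := by have := h1.npos; omega
      have htl2 : ThompsonLike c q w s f := by
        rw [tl_iff]
        exact ⟨m, y, h2d.congr hag2⟩
      obtain ⟨k, hk⟩ := h1.pieces 0 h1.npos
      have hx1 : x 1 = c := by rw [← hn1', h1.x_last]
      have hprep := htl2.prepend (p := p) hpc
        (by rw [← h1.x_zero]; exact h1.x_dyadic 0 (by omega))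
        ⟨k, fun t ht => by
          rw [hag1 t ht, hag1 p ⟨le_refl _, le_of_lt hpc⟩]
          have h0 : t ∈ Set.Icc (x 0) (x (0+1)) := by rw [h1.x_zero, hx1]; exact ht
          have := hk t h0
          rw [h1.x_zero] at this
          exact this⟩
      rw [hfp] at hprep
      have hfc : f c = w := by rw [hag2 c ⟨le_refl _, le_of_lt hcq⟩, h2d.map_p]
      exact hprep

lemma two_zpow_add (k l : ℤ) : (2:ℝ) ^ (k + l) = (2:ℝ) ^ k * (2:ℝ) ^ l :=
  zpow_add₀ (by norm_num) k l

lemma tl_comp_aux : ∀ N : ℕ, ∀ {p q r s t' u : ℝ} {f g : ℝ → ℝ} {n m : ℕ} {x y : ℕ → ℝ},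
    n + m ≤ N → IsDyadic r → TLd p q r s f n x → TLd r s t' u g m y →
    ThompsonLike p q t' u (g ∘ f) := by
  intro N
  induction N using Nat.strong_induction_on with
  | _ N IH =>
    intro p q r s t' u f g n m x y hN hr h1 h2
    have hy0 : y 0 = r := h2.x_zero
    have hgr : g r = t' := h2.map_p
    rcases lt_or_ge 1 m with hm2 | hm1
    · -- m ≥ 2
      have hy1r : r < y 1 := by rw [← hy0]; exact h2.x_mono 0 h2.npos
      have hy1s : y 1 < s := by rw [← h2.x_last]; exact h2.xlt (by omega) (le_refl _)
      obtain ⟨k0, hk0⟩ := h1.pieces 0 h1.npos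
      obtain ⟨l0, hl0⟩ := h2.pieces 0 h2.npos
      have hx0 : x 0 = p := h1.x_zero
      have hfp : f p = r := h1.map_p
      have hk0' : ∀ t ∈ Set.Icc p (x 1), f t = r + (2:ℝ) ^ k0 * (t - p) := by
        intro t ht
        have h0 : t ∈ Set.Icc (x 0) (x (0+1)) := by rw [hx0]; exact ht
        have := hk0 t h0
        rwa [hx0, hfp] at this
      have hl0' : ∀ z ∈ Set.Icc r (y 1), g z = t' + (2:ℝ) ^ l0 * (z - r) := by
        intro z hz
        have h0 : z ∈ Set.Icc (y 0) (y (0+1)) := by rw [hy0]; exact hz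
        have := hl0 z h0
        rwa [hy0, hgr] at this
      -- key step : find the splitting point d
      by_cases hcmp : f (x 1) ≤ y 1
      · -- d = x 1
        have hn2 : 2 ≤ n := by
          by_contra hcon
          have hx1 : x 1 = q := by rw [show (1:ℕ) = n by have := h1.npos; omega]; exact h1.x_last
          rw [hx1, h1.map_q] at hcmp
          linarith
        have hx1q : x 1 < q := by rw [← h1.x_last]; exact h1.xlt (by omega) (le_refl _)
        have hpx1 : p < x 1 := by rw [← hx0]; exact h1.x_mono 0 h1.npos
        have hf' := h1.drop_first hn2
        have hfx1r : r < f (x 1) := by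
          rw [← hfp, ← hx0]
          exact h1.fx_lt (by omega) (by omega)
        have hfx1d : IsDyadic (f (x 1)) := h1.val_dyadic hr 1 (by omega)
        have htail : ThompsonLike (x 1) q (g (f (x 1))) u (g ∘ f) := by
          rcases eq_or_lt_of_le hcmp with he | hlt
          · have hg' := h2.drop_first hm2
            rw [← he] at hg'
            exact IH ((n-1) + (m-1)) (by omega) (le_refl _) hfx1d hf' hg'
          · have hg' := h2.shorten_first (d := f (x 1)) hfx1r hlt hfx1d
            exact IH ((n-1) + m) (by omega) (le_refl _) hfx1d hf' hg'
        have hprep := htail.prepend (p := p) hpx1 (by rw [← hx0]; exact h1.x_dyadic 0 (by omega))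
          ⟨l0 + k0, fun t ht => by
            show g (f t) = g (f p) + _
            have hft : f t ∈ Set.Icc r (y 1) := by
              constructor
              · rw [← hfp]
                exact h1.monotoneOn ⟨le_refl _, le_of_lt h1.ppq⟩
                  ⟨ht.1, le_trans ht.2 (le_of_lt hx1q)⟩ ht.1
              · refine le_trans ?_ hcmp
                exact h1.monotoneOn ⟨ht.1, le_trans ht.2 (le_of_lt hx1q)⟩
                  ⟨le_of_lt hpx1, le_of_lt hx1q⟩ ht.2
            rw [hl0' (f t) hft, hk0' t ht, two_zpow_add, hfp, hgr]
            ring⟩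
        have hgfp2 : (g ∘ f) p = t' := by show g (f p) = t'; rw [hfp, hgr]
        rwa [hgfp2] at hprep
      · -- d interior to the first piece of f
        push_neg at hcmp
        set d := p + (2:ℝ) ^ (-k0) * (y 1 - r) with hd
        have hk0pos : (0:ℝ) < (2:ℝ) ^ k0 := zpow_pos (by norm_num) _
        have hk0pos' : (0:ℝ) < (2:ℝ) ^ (-k0) := zpow_pos (by norm_num) _
        have hkk : (2:ℝ) ^ k0 * ((2:ℝ) ^ (-k0) * (y 1 - r)) = y 1 - r := by
          rw [← mul_assoc, ← zpow_add₀ (by norm_num : (2:ℝ) ≠ 0)]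
          simp
        have hpd : p < d := by
          have : (0:ℝ) < (2:ℝ) ^ (-k0) * (y 1 - r) := by
            apply mul_pos hk0pos'; linarith
          linarith
        have hpx1 : p < x 1 := by rw [← hx0]; exact h1.x_mono 0 h1.npos
        have hfx1 : f (x 1) = r + (2:ℝ) ^ k0 * (x 1 - p) :=
          hk0' (x 1) ⟨le_of_lt hpx1, le_refl _⟩
        have hdx1 : d < x 1 := by
          have h3 : (2:ℝ) ^ k0 * (d - p) < (2:ℝ) ^ k0 * (x 1 - p) := by
            have : (2:ℝ) ^ k0 * (d - p) = y 1 - r := by rw [hd]; ring_nf; rw [mul_comm] at hkk ⊢; linarith [hkk]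
            rw [this]; linarith
          have := (mul_lt_mul_iff_right₀ hk0pos).mp h3
          linarith
        have hfd : f d = y 1 := by
          rw [hk0' d ⟨le_of_lt hpd, le_of_lt hdx1⟩, hd]
          ring_nf
          rw [mul_comm] at hkk
          linarith [hkk]
        have hpdy : IsDyadic p := by rw [← hx0]; exact h1.x_dyadic 0 (by omega)
        have hdd : IsDyadic d := hpdy.add (((h2.x_dyadic 1 (by omega)).sub hr).zpow_mul (-k0))
        have hdq : d < q := by
          have hx1q : x 1 ≤ q := by
            rw [← h1.x_last]; exact h1.xle (by have := h1.npos; omega) (le_refl _)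
          linarith
        have hf' := h1.shorten_first hpd hdx1 hdd
        have hg' := h2.drop_first hm2
        rw [← hfd] at hg'
        have htail : ThompsonLike d q (g (f d)) u (g ∘ f) :=
          IH (n + (m-1)) (by omega) (le_refl _) (by rw [hfd]; exact h2.x_dyadic 1 (by omega)) hf' hg'
        have hprep := htail.prepend (p := p) hpd hpdy
          ⟨l0 + k0, fun t ht => by
            show g (f t) = g (f p) + _
            have hft : f t ∈ Set.Icc r (y 1) := by
              constructor
              · rw [← hfp]
                exact h1.monotoneOn ⟨le_refl _, le_of_lt h1.ppq⟩
                  ⟨ht.1, le_trans ht.2 (le_of_lt hdq)⟩ ht.1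
              · rw [← hfd]
                exact h1.monotoneOn ⟨ht.1, le_trans ht.2 (le_of_lt hdq)⟩
                  ⟨le_of_lt hpd, le_of_lt hdq⟩ ht.2
            rw [hl0' (f t) hft, hk0' t ⟨ht.1, le_trans ht.2 (le_of_lt hdx1)⟩, two_zpow_add,
              hfp, hgr]
            ring⟩
        have hgfp : (g ∘ f) p = t' := by show g (f p) = t'; rw [hfp, hgr]
        rwa [hgfp] at hprep
    · -- m = 1
      have hy1 : y 1 = s := by
        rw [show (1:ℕ) = m by have := h2.npos; omega]; exact h2.x_last
      obtain ⟨l, hl⟩ := h2.pieces 0 h2.npos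
      have hl' : ∀ z ∈ Set.Icc r s, g z = t' + (2:ℝ) ^ l * (z - r) := by
        intro z hz
        have h0 : z ∈ Set.Icc (y 0) (y (0+1)) := by
          rw [hy0, show (0:ℕ)+1 = 1 from rfl, hy1]; exact hz
        have := hl z h0
        rwa [hy0, hgr] at this
      refine tl_iff.mpr ⟨n, x, ?_, ?_, h1.npos, h1.x_zero, h1.x_last, h1.x_mono, h1.x_dyadic, ?_⟩
      · show g (f p) = t'
        rw [h1.map_p, hgr]
      · show g (f q) = u
        rw [h1.map_q]
        exact h2.map_q
      · intro i hi
        obtain ⟨k, hk⟩ := h1.pieces i hi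
        refine ⟨l + k, fun t ht => ?_⟩
        show g (f t) = g (f (x i)) + _
        have htpq : t ∈ Set.Icc p q := h1.piece_subset hi ht
        have hxi : x i ∈ Set.Icc p q := h1.x_mem (by omega)
        rw [hl' (f t) (h1.mapsTo htpq), hl' (f (x i)) (h1.mapsTo hxi), hk t ht, two_zpow_add]
        ring

lemma tl_comp {p q r s t' u : ℝ} {f g : ℝ → ℝ} (hr : IsDyadic r)
    (h1 : ThompsonLike p q r s f) (h2 : ThompsonLike r s t' u g) :
    ThompsonLike p q t' u (g ∘ f) := by
  obtain ⟨n, x, h1d⟩ := tl_iff.mp h1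
  obtain ⟨m, y, h2d⟩ := tl_iff.mp h2
  exact tl_comp_aux (n + m) (le_refl _) hr h1d h2d

lemma tl_bijective {a b : ℝ} {H : ℝ → ℝ} (h : ThompsonLike a b a b H)
    (hout : ∀ t ∉ Set.Icc a b, H t = t) : Function.Bijective H := by
  obtain ⟨n, x, hd⟩ := tl_iff.mp h
  have hdy : IsDyadic a := by rw [← hd.x_zero]; exact hd.x_dyadic 0 (by omega)
  constructor
  · intro t1 t2 he
    by_cases h1 : t1 ∈ Set.Icc a b <;> by_cases h2 : t2 ∈ Set.Icc a b
    · exact hd.strictMonoOn.injOn h1 h2 he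
    · exfalso; rw [hout t2 h2] at he; rw [← he] at h2; exact h2 (hd.mapsTo h1)
    · exfalso; rw [hout t1 h1] at he; rw [he] at h1; exact h1 (hd.mapsTo h2)
    · rwa [hout t1 h1, hout t2 h2] at he
  · intro yy
    by_cases hy : yy ∈ Set.Icc a b
    · obtain ⟨t, ht, hft, _⟩ := hd.surj hdy hy
      exact ⟨t, hft⟩
    · exact ⟨yy, hout yy hy⟩

lemma perm_fix_inv (g : Equiv.Perm ℝ) {t : ℝ} (h : g t = t) : g⁻¹ t = t := by
  conv_lhs => rw [← h]
  exact g.symm_apply_apply t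

lemma InF_inv {a b : ℝ} {g : Equiv.Perm ℝ} (hg : InF a b g) : InF a b g⁻¹ := by
  obtain ⟨htl, hout⟩ := hg
  obtain ⟨n, x, hd⟩ := tl_iff.mp htl
  have hdy : IsDyadic a := by rw [← hd.x_zero]; exact hd.x_dyadic 0 (by omega)
  refine ⟨?_, fun t ht => perm_fix_inv g (hout t ht)⟩
  have hga : g a = a := hd.map_p
  have hgb : g b = b := hd.map_q
  refine tl_iff.mpr ⟨n, fun i => g (x i), ?_, ?_, hd.npos, ?_, ?_, ?_, ?_, ?_⟩
  · conv_lhs => rw [← hga]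
    exact g.symm_apply_apply a
  · conv_lhs => rw [← hgb]
    exact g.symm_apply_apply b
  · rw [hd.x_zero]; exact hga
  · rw [hd.x_last]; exact hgb
  · intro i hi
    exact hd.strictMonoOn (hd.x_mem (by omega)) (hd.x_mem (by omega)) (hd.x_mono i hi)
  · intro i hi
    exact hd.val_dyadic hdy i hi
  · intro i hi
    obtain ⟨k, hk⟩ := hd.pieces i hi
    have hpos : (0:ℝ) < (2:ℝ) ^ (-k) := zpow_pos (by norm_num) _
    have hposk : (0:ℝ) < (2:ℝ) ^ k := zpow_pos (by norm_num) _
    have hkk : (2:ℝ) ^ k * ((2:ℝ) ^ (-k)) = 1 := by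
      rw [← zpow_add₀ (by norm_num : (2:ℝ) ≠ 0)]; simp
    refine ⟨-k, fun t ht => ?_⟩
    have hend := hk (x (i+1)) ⟨le_of_lt (hd.x_mono i hi), le_refl _⟩
    set z := x i + (2:ℝ) ^ (-k) * (t - g (x i)) with hz
    have hz1 : x i ≤ z := by
      have : (0:ℝ) ≤ (2:ℝ) ^ (-k) * (t - g (x i)) := mul_nonneg (le_of_lt hpos) (by linarith [ht.1])
      linarith
    have hz2 : z ≤ x (i+1) := by
      have h5 : t - g (x i) ≤ (2:ℝ) ^ k * (x (i+1) - x i) := by linarith [ht.2]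
      have h6 : (2:ℝ) ^ (-k) * (t - g (x i)) ≤ (2:ℝ) ^ (-k) * ((2:ℝ) ^ k * (x (i+1) - x i)) :=
        mul_le_mul_of_nonneg_left h5 (le_of_lt hpos)
      have h7 : (2:ℝ) ^ (-k) * ((2:ℝ) ^ k * (x (i+1) - x i)) = x (i+1) - x i := by
        rw [← mul_assoc, mul_comm ((2:ℝ)^(-k)), hkk, one_mul]
      rw [h7] at h6
      linarith
    have hgz : g z = t := by
      rw [hk z ⟨hz1, hz2⟩, hz]
      have : (2:ℝ) ^ k * ((2:ℝ) ^ (-k) * (t - g (x i))) = t - g (x i) := by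
        rw [← mul_assoc, hkk, one_mul]
      ring_nf
      ring_nf at this
      linarith
    have hinvz : g⁻¹ t = z := by
      rw [← hgz]; exact g.symm_apply_apply z
    rw [hinvz, hz]
    have hfix : g⁻¹ (g (x i)) = x i := g.symm_apply_apply (x i)
    rw [hfix]

lemma tl_translate {p q r s : ℝ} {f : ℝ → ℝ} (h : ThompsonLike p q r s f) (δ ε : ℝ)
    (hδ : IsDyadic δ) : ThompsonLike (p + δ) (q + δ) (r + ε) (s + ε) (fun t => f (t - δ) + ε) := by
  obtain ⟨n, x, hd⟩ := tl_iff.mp h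
  refine tl_iff.mpr ⟨n, fun i => x i + δ, ?_, ?_, hd.npos, by rw [hd.x_zero], by rw [hd.x_last],
    ?_, ?_, ?_⟩
  · show f (p + δ - δ) + ε = r + ε
    rw [show p + δ - δ = p by ring, hd.map_p]
  · show f (q + δ - δ) + ε = s + ε
    rw [show q + δ - δ = q by ring, hd.map_q]
  · intro i hi
    have := hd.x_mono i hi; linarith
  · intro i hi
    exact (hd.x_dyadic i hi).add hδ
  · intro i hi
    obtain ⟨k, hk⟩ := hd.pieces i hi
    refine ⟨k, fun t ht => ?_⟩
    show f (t - δ) + ε = f (x i + δ - δ) + ε + 2 ^ k * (t - (x i + δ))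
    rw [show x i + δ - δ = x i by ring]
    have h5 : t - δ ∈ Set.Icc (x i) (x (i+1)) := ⟨by linarith [ht.1], by linarith [ht.2]⟩
    have := hk (t - δ) h5
    rw [this]
    ring

lemma one_div_pow_eq_zpow (m : ℕ) : (1:ℝ)/2^m = (2:ℝ)^(-(m:ℤ)) := by
  rw [one_div, ← zpow_natCast (2:ℝ) m, ← zpow_neg]

lemma dyadic_nat_div (b m : ℕ) : IsDyadic ((b:ℝ)/2^m) := ⟨(b:ℤ), m, by push_cast; ring⟩

lemma exists_tl_nat : ∀ (b : ℕ), 0 < b → ∀ (m m' : ℕ), ∃ f, ThompsonLike 0 (1/2^m) 0 ((b:ℝ)/2^m') f := by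
  intro b
  induction b with
  | zero => omega
  | succ b IH =>
    intro _ m m'
    rcases Nat.eq_zero_or_pos b with rfl | hb
    · -- b + 1 = 1 : single linear piece
      refine ⟨fun t => (2:ℝ)^((m:ℤ) - m') * t, ?_⟩
      have key : (2:ℝ)^((m:ℤ) - m') * (1/2^m) = 1/2^m' := by
        rw [one_div_pow_eq_zpow, one_div_pow_eq_zpow, ← zpow_add₀ (by norm_num : (2:ℝ) ≠ 0)]
        congr 1
        ring
      have h0 : (0:ℝ) < 1/2^m := by positivity
      have hs := tl_single (f := fun t => (2:ℝ)^((m:ℤ) - m') * t) h0 IsDyadic.zero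
        ⟨1, m, by norm_num⟩ ((m:ℤ) - m') (fun t _ => by ring)
      simp only [mul_zero, key] at hs
      convert hs using 2
      norm_num
    · -- b + 1 ≥ 2 : glue the map for b on a half interval with a linear piece
      obtain ⟨f1, hf1⟩ := IH hb (m+1) m'
      set c : ℝ := 1/2^(m+1) with hc
      set qq : ℝ := 1/2^m with hq
      have hcq : c < qq := by
        rw [hc, hq]
        apply div_lt_div_of_pos_left one_pos (by positivity)
        exact pow_lt_pow_right₀ (by norm_num) (by omega)
      have hc0 : (0:ℝ) < c := by rw [hc]; positivity
      have hdc : IsDyadic c := ⟨1, m+1, by rw [hc]; norm_num⟩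
      have hdq : IsDyadic qq := ⟨1, m, by rw [hq]; norm_num⟩
      have hf2q : (b:ℝ)/2^m' + (2:ℝ)^((m:ℤ) + 1 - m') * (qq - c) = ((b:ℝ)+1)/2^m' := by
        have hdiff : qq - c = 1/2^(m+1) := by
          rw [hq, hc]; field_simp; ring
        rw [hdiff, one_div_pow_eq_zpow, ← zpow_add₀ (by norm_num : (2:ℝ) ≠ 0)]
        rw [show (m:ℤ) + 1 - m' + (-(((m:ℕ)+1 : ℕ):ℤ)) = -(m':ℤ) by push_cast; ring]
        rw [← one_div_pow_eq_zpow]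
        ring
      have hf2tl0 := tl_single (f := fun t => (b:ℝ)/2^m' + (2:ℝ)^((m:ℤ) + 1 - m') * (t - c))
        hcq hdc hdq ((m:ℤ) + 1 - m') (fun t _ => by beta_reduce; ring)
      have hf2tl : ThompsonLike c qq ((b:ℝ)/2^m') (((b:ℝ)+1)/2^m')
          (fun t => (b:ℝ)/2^m' + (2:ℝ)^((m:ℤ) + 1 - m') * (t - c)) := by
        rw [show (b:ℝ)/2^m' + (2:ℝ)^((m:ℤ) + 1 - m') * (c - c) = (b:ℝ)/2^m' by ring,
          hf2q] at hf2tl0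
        exact hf2tl0
      obtain ⟨n1, x1, hd1⟩ := tl_iff.mp hf1
      refine ⟨fun t => if t ≤ c then f1 t
        else (b:ℝ)/2^m' + (2:ℝ)^((m:ℤ) + 1 - m') * (t - c), ?_⟩
      have hglue := tl_glue hd1 hf2tl (f := fun t => if t ≤ c then f1 t
          else (b:ℝ)/2^m' + (2:ℝ)^((m:ℤ) + 1 - m') * (t - c))
        (fun t ht => by
          show (if t ≤ c then f1 t else _) = f1 t
          rw [if_pos ht.2]) ?_
      · push_cast at hglue ⊢
        exact hglue
      · intro t ht
        show (if t ≤ c then f1 t else (b:ℝ)/2^m' + (2:ℝ)^((m:ℤ) + 1 - m') * (t - c))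
          = (b:ℝ)/2^m' + (2:ℝ)^((m:ℤ) + 1 - m') * (t - c)
        rcases eq_or_lt_of_le ht.1 with he | hlt
        · rw [if_pos (le_of_eq he.symm), ← he]
          have : f1 c = (b:ℝ)/2^m' := hf1.2.1
          rw [this]
          ring
        · rw [if_neg (by linarith)]

lemma exists_tl_nat2 : ∀ (a : ℕ), 0 < a → ∀ (m : ℕ) (b : ℕ), 0 < b → ∀ (m' : ℕ),
    ∃ f, ThompsonLike 0 ((a:ℝ)/2^m) 0 ((b:ℝ)/2^m') f := by
  intro a
  induction a with
  | zero => omega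
  | succ a IH =>
    intro _ m b hb m'
    rcases Nat.eq_zero_or_pos a with rfl | ha
    · obtain ⟨f, hf⟩ := exists_tl_nat b hb m m'
      exact ⟨f, by push_cast; simpa using hf⟩
    · obtain ⟨f1, hf1⟩ := IH ha m b hb (m'+1)
      obtain ⟨f2', hf2'⟩ := exists_tl_nat b hb m (m'+1)
      have hf2 := tl_translate hf2' ((a:ℝ)/2^m) ((b:ℝ)/2^(m'+1)) (dyadic_nat_div a m)
      set c : ℝ := (a:ℝ)/2^m with hc
      have he1 : (0:ℝ) + c = c := by ring
      have he2 : 1/2^m + c = ((a:ℝ)+1)/2^m := by rw [hc]; field_simp; ring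
      have he3 : (0:ℝ) + (b:ℝ)/2^(m'+1) = (b:ℝ)/2^(m'+1) := by ring
      have he4 : (b:ℝ)/2^(m'+1) + (b:ℝ)/2^(m'+1) = (b:ℝ)/2^m' := by
        rw [pow_succ]
        field_simp
        ring
      rw [he1, he2, he3, he4] at hf2
      obtain ⟨n1, x1, hd1⟩ := tl_iff.mp hf1
      refine ⟨fun t => if t ≤ c then f1 t else f2' (t - c) + (b:ℝ)/2^(m'+1), ?_⟩
      have hglue := tl_glue hd1 hf2 (f := fun t => if t ≤ c then f1 t else f2' (t - c) + (b:ℝ)/2^(m'+1))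
        (fun t ht => by simp [ht.2]) ?_
      · push_cast at hglue ⊢
        exact hglue
      · intro t ht
        show (if t ≤ c then f1 t else f2' (t - c) + (b:ℝ)/2^(m'+1))
          = f2' (t - c) + (b:ℝ)/2^(m'+1)
        rcases eq_or_lt_of_le ht.1 with he | hlt
        · rw [if_pos (le_of_eq he.symm), ← he]
          show f1 c = f2' (c - c) + (b:ℝ)/2^(m'+1)
          rw [show c - c = (0:ℝ) by ring, hf2'.1]
          have : f1 c = (b:ℝ)/2^(m'+1) := hf1.2.1
          rw [this]
          ring
        · rw [if_neg (by linarith)]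

lemma pos_dyadic_rep {L : ℝ} (hL : IsDyadic L) (hpos : 0 < L) :
    ∃ (A : ℕ) (m : ℕ), 0 < A ∧ L = (A:ℝ)/2^m := by
  obtain ⟨a, m, rfl⟩ := hL
  have ha : 0 < a := by
    by_contra hcon
    push_neg at hcon
    have : (a:ℝ) ≤ 0 := by exact_mod_cast hcon
    have h2 : (0:ℝ) < 2^m := by positivity
    have := div_nonpos_of_nonpos_of_nonneg this (le_of_lt h2)
    linarith
  exact ⟨a.toNat, m, by omega, by
    have hcast : ((a.toNat : ℕ) : ℝ) = (a : ℝ) := by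
      exact_mod_cast congrArg (fun z : ℤ => (z : ℝ)) (Int.toNat_of_nonneg (le_of_lt ha))
    rw [hcast]⟩

lemma exists_tl {a b c d : ℝ} (hab : a < b) (hcd : c < d) (hda : IsDyadic a) (hdb : IsDyadic b)
    (hdc : IsDyadic c) (hdd : IsDyadic d) : ∃ f, ThompsonLike a b c d f := by
  obtain ⟨A, m, hA, hAe⟩ := pos_dyadic_rep (hdb.sub hda) (by linarith)
  obtain ⟨B, m', hB, hBe⟩ := pos_dyadic_rep (hdd.sub hdc) (by linarith)
  obtain ⟨f0, hf0⟩ := exists_tl_nat2 A hA m B hB m'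
  rw [← hAe, ← hBe] at hf0
  have := tl_translate hf0 a c hda
  rw [show (0:ℝ) + a = a by ring, show b - a + a = b by ring, show (0:ℝ) + c = c by ring,
    show d - c + c = d by ring] at this
  exact ⟨_, this⟩

lemma tl_congr' {p q r s : ℝ} {f g : ℝ → ℝ} (h : ThompsonLike p q r s f)
    (hfg : ∀ t ∈ Set.Icc p q, g t = f t) : ThompsonLike p q r s g := by
  obtain ⟨n, x, hd⟩ := tl_iff.mp h
  exact tl_iff.mpr ⟨n, x, hd.congr hfg⟩

lemma exists_perm {a b : ℝ} {H : ℝ → ℝ} (h : ThompsonLike a b a b H)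
    (hout : ∀ t ∉ Set.Icc a b, H t = t) : ∃ g : Equiv.Perm ℝ, ∀ t, g t = H t :=
  ⟨Equiv.ofBijective H (tl_bijective h hout), fun _ => rfl⟩

lemma InF_mono {r s u v : ℝ} {g : Equiv.Perm ℝ} (hg : InF r s g) (hur : u ≤ r) (hsv : s ≤ v)
    (hdu : IsDyadic u) (hdv : IsDyadic v) : InF u v g := by
  obtain ⟨htl, hout⟩ := hg
  obtain ⟨n, x, hd⟩ := tl_iff.mp htl
  have hdr : IsDyadic r := by rw [← hd.x_zero]; exact hd.x_dyadic 0 (by omega)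
  have hds : IsDyadic s := by rw [← hd.x_last]; exact hd.x_dyadic n (le_refl _)
  have hout' : ∀ t, t ∉ Set.Icc u v → g t = t :=
    fun t ht => hout t (fun hmem => ht ⟨le_trans hur hmem.1, le_trans hmem.2 hsv⟩)
  refine ⟨?_, hout'⟩
  have key1 : ThompsonLike u s u s ⇑g := by
    rcases eq_or_lt_of_le hur with rfl | hur'
    · exact htl
    · obtain ⟨n0, x0, hid⟩ := tl_iff.mp (tl_id hur' hdu hdr)
      exact tl_glue hid htl
        (fun t ht => by
          rcases eq_or_lt_of_le ht.2 with he | hlt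
          · rw [he]; exact hd.map_p
          · exact hout t (fun hmem => absurd hmem.1 (not_le.mpr hlt)))
        (fun t _ => rfl)
  rcases eq_or_lt_of_le hsv with rfl | hsv'
  · exact key1
  · obtain ⟨n1, x1, hk1⟩ := tl_iff.mp key1
    exact tl_glue hk1 (tl_id hsv' hds hdv)
      (fun t _ => rfl)
      (fun t ht => by
        rcases eq_or_lt_of_le ht.1 with he | hlt
        · rw [← he]; exact hd.map_q
        · exact hout t (fun hmem => absurd hmem.2 (not_le.mpr hlt)))

lemma step {u0 v0 u1 r s : ℝ} (hdu0 : IsDyadic u0) (hdv0 : IsDyadic v0)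
    (hdr : IsDyadic r) (hds : IsDyadic s)
    (hrs : r < s) (h0l : u0 ≤ r) (h0r : r < v0) (h0s : v0 < s) (h1l : u1 < v0)
    (g : Equiv.Perm ℝ) (hg : InF r s g) (hgv : g v0 ≤ v0) :
    ∃ c : ℝ, IsDyadic c ∧ r < c ∧ u1 < c ∧ c < v0 ∧
      ∃ h K : Equiv.Perm ℝ, InF u0 v0 h ∧ InF c s K ∧ g = h * K := by
  obtain ⟨htl, hout⟩ := hg
  obtain ⟨n, x, hd⟩ := tl_iff.mp htl
  obtain ⟨c, hdc, hc1, hc2⟩ := exists_dyadic_btwn (show max r u1 < v0 from max_lt h0r h1l)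
  have hrc : r < c := lt_of_le_of_lt (le_max_left _ _) hc1
  have hu1c : u1 < c := lt_of_le_of_lt (le_max_right _ _) hc1
  have hcs : c < s := lt_trans hc2 h0s
  have hcmem : c ∈ Set.Icc r s := ⟨le_of_lt hrc, le_of_lt hcs⟩
  have hv0mem : v0 ∈ Set.Icc r s := ⟨le_of_lt h0r, le_of_lt h0s⟩
  -- g⁻¹ v0 ≥ v0
  have hgt1 : g (g⁻¹ v0) = v0 := g.apply_symm_apply v0
  have ht1mem : g⁻¹ v0 ∈ Set.Icc r s := by
    by_contra hcon
    rw [hout _ hcon] at hgt1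
    rw [hgt1] at hcon
    exact hcon hv0mem
  have ht1ge : v0 ≤ g⁻¹ v0 := by
    by_contra hcon
    push_neg at hcon
    have := hd.strictMonoOn ht1mem hv0mem hcon
    rw [hgt1] at this
    linarith
  have hgc : g c < v0 := by
    rw [← hgt1]
    exact hd.strictMonoOn hcmem ht1mem (lt_of_lt_of_le hc2 ht1ge)
  have hgcr : r < g c := by
    have := hd.strictMonoOn ⟨le_refl _, le_of_lt hrs⟩ hcmem hrc
    rwa [hd.map_p] at this
  have hdw : IsDyadic (g c) := hd.img_dyadic hdr hcmem hdc
  -- the auxiliary map φ on [c, v0]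
  obtain ⟨φ, hφ⟩ := exists_tl hc2 (show g c < v0 from hgc) hdc hdv0 hdw hdv0
  -- the glued function H
  set H : ℝ → ℝ := fun t => if t < r then t else if t ≤ c then g t else if t ≤ v0 then φ t else t
    with hHdef
  have hHg : ∀ t ∈ Set.Icc r c, H t = g t := by
    intro t ht
    rw [hHdef]
    simp only []
    rw [if_neg (not_lt.mpr ht.1), if_pos ht.2]
  have hHφ : ∀ t ∈ Set.Icc c v0, H t = φ t := by
    intro t ht
    rw [hHdef]
    simp only []
    rcases eq_or_lt_of_le ht.1 with he | hlt
    · rw [if_neg (not_lt.mpr (le_trans (le_of_lt hrc) he.le)),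
        if_pos he.symm.le, ← he, hφ.1]
    · rw [if_neg (not_lt.mpr (le_trans (le_of_lt hrc) (le_trans (le_of_lt hlt) (le_refl t)))),
        if_neg (not_le.mpr hlt), if_pos ht.2]
  have hHolt : ∀ t, t < r → H t = t := by
    intro t ht
    rw [hHdef]; simp only []; rw [if_pos ht]
  have hHogt : ∀ t, v0 < t → H t = t := by
    intro t ht
    rw [hHdef]; simp only []
    rw [if_neg (not_lt.mpr (le_of_lt (lt_trans (lt_trans hrc hc2) ht))),
      if_neg (not_le.mpr (lt_trans hc2 ht)), if_neg (not_le.mpr ht)]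
  -- TL of H on [r, v0]
  have hTL1 : ThompsonLike r c r (g c) H :=
    tl_congr' (tl_restrict_left hd hrc (le_of_lt hcs) hdc) hHg
  have hTL2 : ThompsonLike c v0 (g c) v0 H := tl_congr' hφ hHφ
  obtain ⟨na, xa, hda⟩ := tl_iff.mp hTL1
  have hTLmid : ThompsonLike r v0 r v0 H :=
    tl_glue hda hTL2 (fun t _ => rfl) (fun t _ => rfl)
  -- TL of H on [u0, v0]
  have hTLfull : ThompsonLike u0 v0 u0 v0 H := by
    rcases eq_or_lt_of_le h0l with rfl | hu0r
    · exact hTLmid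
    · obtain ⟨nb, xb, hdb⟩ := tl_iff.mp (tl_id hu0r hdu0 hdr)
      refine tl_glue hdb hTLmid ?_ (fun t _ => rfl)
      intro t ht
      rcases eq_or_lt_of_le ht.2 with he | hlt
      · rw [he, hHg r ⟨le_refl _, le_of_lt hrc⟩, hd.map_p]
      · exact hHolt t hlt
  have hHout : ∀ t, t ∉ Set.Icc u0 v0 → H t = t := by
    intro t ht
    rcases lt_or_ge t u0 with h' | h'
    · exact hHolt t (lt_of_lt_of_le h' h0l)
    · have : v0 < t := by
        by_contra hcon
        push_neg at hcon
        exact ht ⟨h', hcon⟩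
      exact hHogt t this
  obtain ⟨h, hh⟩ := exists_perm hTLfull hHout
  have hInFh : InF u0 v0 h :=
    ⟨tl_congr' hTLfull (fun t _ => hh t), fun t ht => by rw [hh t]; exact hHout t ht⟩
  have hinv := InF_inv hInFh
  obtain ⟨n2, x2, hd2⟩ := tl_iff.mp hinv.1
  -- h c = g c, h v0 = v0
  have hcH : h c = g c := by rw [hh c]; exact hHg c ⟨le_of_lt hrc, le_refl _⟩
  have hinvw : h⁻¹ (g c) = c := by rw [← hcH]; exact h.symm_apply_apply c
  have hv0H : h v0 = v0 := by
    rw [hh v0, hHφ v0 ⟨le_of_lt hc2, le_refl _⟩]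
    exact hφ.2.1
  have hv0inv : h⁻¹ v0 = v0 := perm_fix_inv h hv0H
  -- ψ = h⁻¹ on [g c, s]
  have hu0gc : u0 < g c := lt_of_le_of_lt h0l hgcr
  have hψ1 : ThompsonLike (g c) v0 c v0 ⇑h⁻¹ := by
    have := tl_restrict_right hd2 hu0gc hgc hdw
    rwa [hinvw] at this
  obtain ⟨n3, x3, hd3⟩ := tl_iff.mp hψ1
  have hψ2 : ThompsonLike (g c) s c s ⇑h⁻¹ := by
    refine tl_glue hd3 (tl_id h0s hdv0 hds) (fun t _ => rfl) ?_
    intro t ht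
    rcases eq_or_lt_of_le ht.1 with he | hlt
    · rw [← he]; exact hv0inv
    · refine perm_fix_inv h ?_
      rw [hh t]
      exact hHogt t hlt
  -- g restricted to [c, s]
  have hgres : ThompsonLike c s (g c) s ⇑g := tl_restrict_right hd hrc hcs hdc
  -- the composite K
  have hcomp : ThompsonLike c s c s (⇑h⁻¹ ∘ ⇑g) := tl_comp hdw hgres hψ2
  have hKTL : ThompsonLike c s c s ⇑(h⁻¹ * g) := tl_congr' hcomp (fun t _ => rfl)
  have hKout : ∀ t, t ∉ Set.Icc c s → (h⁻¹ * g) t = t := by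
    intro t ht
    show h⁻¹ (g t) = t
    rcases lt_or_ge t c with h' | h'
    · rcases lt_or_ge t r with h'' | h''
      · rw [hout t (fun hmem => absurd hmem.1 (not_le.mpr h''))]
        refine perm_fix_inv h ?_
        rw [hh t]
        exact hHolt t h''
      · have : h t = g t := by rw [hh t]; exact hHg t ⟨h'', le_of_lt h'⟩
        rw [← this]
        exact h.symm_apply_apply t
    · have hts : s < t := by
        by_contra hcon
        push_neg at hcon
        exact ht ⟨h', hcon⟩
      rw [hout t (fun hmem => absurd hmem.2 (not_le.mpr hts))]
      refine perm_fix_inv h ?_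
      rw [hh t]
      exact hHogt t (lt_trans h0s hts)
  refine ⟨c, hdc, hrc, hu1c, hc2, h, h⁻¹ * g, hInFh, ⟨hKTL, hKout⟩, ?_⟩
  rw [mul_inv_cancel_left]

lemma frag {N : ℕ} (u v : Fin N → ℝ) (hdu : ∀ j, IsDyadic (u j)) (hdv : ∀ j, IsDyadic (v j)) :
    ∀ J : Finset (Fin N), ∀ r s : ℝ, IsDyadic r → IsDyadic s → r < s →
    (Set.Ioo r s ⊆ ⋃ j ∈ J, Set.Ioo (u j) (v j)) →
    ∀ g : Equiv.Perm ℝ, InF r s g →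
    g ∈ Subgroup.closure (⋃ j, {g : Equiv.Perm ℝ | InF (u j) (v j) g}) := by
  classical
  intro J
  induction J using Finset.strongInduction with
  | _ J IH =>
    intro r s hdr hds hrs hcov g hg
    have hmid : (r + s)/2 ∈ Set.Ioo r s := ⟨by linarith, by linarith⟩
    have hj' : ∃ j, j ∈ J ∧ (r+s)/2 ∈ Set.Ioo (u j) (v j) := by
      have := hcov hmid
      simp only [Set.mem_iUnion, Set.mem_Ioo] at this
      obtain ⟨j, h1, h2, h3⟩ := this
      exact ⟨j, h1, h2, h3⟩
    obtain ⟨j', hj'J, hj'mem⟩ := hj'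
    set A := J.filter (fun j => ∃ t, t ∈ Set.Ioo r s ∩ Set.Ioo (u j) (v j)) with hA
    have hAne : A.Nonempty :=
      ⟨j', Finset.mem_filter.mpr ⟨hj'J, ⟨_, hmid, hj'mem⟩⟩⟩
    obtain ⟨j0, hj0A, hj0min⟩ := A.exists_min_image u hAne
    have hj0J : j0 ∈ J := (Finset.mem_filter.mp hj0A).1
    obtain ⟨t0, ht0⟩ := (Finset.mem_filter.mp hj0A).2
    have hrv0 : r < v j0 := lt_trans ht0.1.1 ht0.2.2
    have hu0r : u j0 ≤ r := by
      by_contra hcon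
      push_neg at hcon
      have hminr : r < min (u j0) s := lt_min hcon hrs
      set t := (r + min (u j0) s)/2 with htdef
      have htIoo : t ∈ Set.Ioo r s := by
        constructor
        · rw [htdef]; linarith
        · rw [htdef]
          have : min (u j0) s ≤ s := min_le_right _ _
          linarith
      have htu : t < u j0 := by
        have h5 : t < min (u j0) s := by rw [htdef]; linarith
        exact lt_of_lt_of_le h5 (min_le_left _ _)
      have := hcov htIoo
      simp only [Set.mem_iUnion] at this
      obtain ⟨j, hjJ, hjmem⟩ := this
      have hjA : j ∈ A := Finset.mem_filter.mpr ⟨hjJ, ⟨t, htIoo, hjmem⟩⟩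
      have := hj0min j hjA
      have : u j0 ≤ u j := this
      have : u j < t := hjmem.1
      linarith
    rcases le_or_gt s (v j0) with hle | hv0s
    · -- one interval suffices
      have hmemF : InF (u j0) (v j0) g := InF_mono hg hu0r hle (hdu j0) (hdv j0)
      exact Subgroup.subset_closure (Set.mem_iUnion.mpr ⟨j0, hmemF⟩)
    · -- main case
      have hv0Ioo : v j0 ∈ Set.Ioo r s := ⟨hrv0, hv0s⟩
      have hj1' : ∃ j, j ∈ J ∧ v j0 ∈ Set.Ioo (u j) (v j) := by
        have := hcov hv0Ioo
        simp only [Set.mem_iUnion, Set.mem_Ioo] at this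
        obtain ⟨j, h1, h2, h3⟩ := this
        exact ⟨j, h1, h2, h3⟩
      obtain ⟨j1, hj1J, hj1mem⟩ := hj1'
      have hj1ne : j1 ≠ j0 := by
        intro he
        rw [he] at hj1mem
        exact lt_irrefl _ hj1mem.2
      -- the covering of the leftover interval
      have hcov' : ∀ c : ℝ, r < c → u j1 < c →
          Set.Ioo c s ⊆ ⋃ j ∈ J.erase j0, Set.Ioo (u j) (v j) := by
        intro c hrc hu1c t ht
        simp only [Set.mem_iUnion]
        rcases lt_or_ge t (v j0) with h' | h'
        · exact ⟨j1, Finset.mem_erase.mpr ⟨hj1ne, hj1J⟩,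
            ⟨lt_trans hu1c ht.1, lt_trans h' hj1mem.2⟩⟩
        · have htIoo : t ∈ Set.Ioo r s := ⟨lt_trans hrc ht.1, ht.2⟩
          have := hcov htIoo
          simp only [Set.mem_iUnion] at this
          obtain ⟨j, hjJ, hjmem⟩ := this
          refine ⟨j, Finset.mem_erase.mpr ⟨?_, hjJ⟩, hjmem⟩
          intro he
          rw [he] at hjmem
          exact absurd hjmem.2 (not_lt.mpr h')
      have herase : J.erase j0 ⊂ J := Finset.erase_ssubset hj0J
      obtain ⟨n, x, hd⟩ := tl_iff.mp hg.1
      by_cases hdir : g (v j0) ≤ v j0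
      · obtain ⟨c, hdc, hrc, hu1c, hcv0, h, K, hInFh, hInFK, hfac⟩ :=
          step (hdu j0) (hdv j0) hdr hds hrs hu0r hrv0 hv0s hj1mem.1 g hg hdir
        have hhmem : h ∈ Subgroup.closure (⋃ j, {g : Equiv.Perm ℝ | InF (u j) (v j) g}) :=
          Subgroup.subset_closure (Set.mem_iUnion.mpr ⟨j0, hInFh⟩)
        have hKmem := IH (J.erase j0) herase c s hdc hds (lt_trans hcv0 hv0s)
          (hcov' c hrc hu1c) K hInFK
        rw [hfac]
        exact mul_mem hhmem hKmem
      · push_neg at hdir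
        have hg' := InF_inv hg
        have hv0mem : v j0 ∈ Set.Icc r s := ⟨le_of_lt hrv0, le_of_lt hv0s⟩
        have hginv : g⁻¹ (v j0) ≤ v j0 := by
          by_contra hcon
          push_neg at hcon
          have hmem2 : g⁻¹ (v j0) ∈ Set.Icc r s := by
            by_contra hcon2
            have h5 := hg.2 _ hcon2
            rw [show g (g⁻¹ (v j0)) = v j0 from g.apply_symm_apply _] at h5
            rw [← h5] at hcon2
            exact hcon2 hv0mem
          have := hd.strictMonoOn hv0mem hmem2 hcon
          rw [show g (g⁻¹ (v j0)) = v j0 from g.apply_symm_apply _] at this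
          linarith
        obtain ⟨c, hdc, hrc, hu1c, hcv0, h, K, hInFh, hInFK, hfac⟩ :=
          step (hdu j0) (hdv j0) hdr hds hrs hu0r hrv0 hv0s hj1mem.1 g⁻¹ hg' hginv
        have hhmem : h ∈ Subgroup.closure (⋃ j, {g : Equiv.Perm ℝ | InF (u j) (v j) g}) :=
          Subgroup.subset_closure (Set.mem_iUnion.mpr ⟨j0, hInFh⟩)
        have hKmem := IH (J.erase j0) herase c s hdc hds (lt_trans hcv0 hv0s)
          (hcov' c hrc hu1c) K hInFK
        have hmeminv : g⁻¹ ∈ Subgroup.closure (⋃ j, {g : Equiv.Perm ℝ | InF (u j) (v j) g}) := by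
          rw [hfac]; exact mul_mem hhmem hKmem
        simpa using inv_mem hmeminv

lemma closure_le_closure {m n : ℕ} (r s : Fin m → ℝ) (u v : Fin n → ℝ)
    (hr : ∀ i, IsDyadic (r i)) (hs : ∀ i, IsDyadic (s i))
    (hu : ∀ j, IsDyadic (u j)) (hv : ∀ j, IsDyadic (v j))
    (hrs : ∀ i, r i < s i)
    (hsub : (⋃ i, Set.Ioo (r i) (s i)) ⊆ ⋃ j, Set.Ioo (u j) (v j)) :
    Subgroup.closure (⋃ i, {g : Equiv.Perm ℝ | InF (r i) (s i) g}) ≤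
      Subgroup.closure (⋃ j, {g : Equiv.Perm ℝ | InF (u j) (v j) g}) := by
  rw [Subgroup.closure_le]
  intro g hgmem
  obtain ⟨i, hi⟩ := Set.mem_iUnion.mp hgmem
  have hcovi : Set.Ioo (r i) (s i) ⊆ ⋃ j ∈ (Finset.univ : Finset (Fin n)), Set.Ioo (u j) (v j) := by
    intro t ht
    have : t ∈ ⋃ j, Set.Ioo (u j) (v j) := hsub (Set.mem_iUnion.mpr ⟨i, ht⟩)
    simpa using this
  exact frag u v hu hv Finset.univ (r i) (s i) (hr i) (hs i) (hrs i) hcovi g hi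


theorem statement6 (m n : ℕ) (r s : Fin m → ℝ) (u v : Fin n → ℝ)
    (hr : ∀ i, IsDyadic (r i)) (hs : ∀ i, IsDyadic (s i))
    (hu : ∀ j, IsDyadic (u j)) (hv : ∀ j, IsDyadic (v j))
    (hrs : ∀ i, r i < s i) (huv : ∀ j, u j < v j)
    (hr0 : ∀ i, 0 ≤ r i) (hs1 : ∀ i, s i ≤ 1)
    (hu0 : ∀ j, 0 ≤ u j) (hv1 : ∀ j, v j ≤ 1)
    (hcover : (⋃ i, Set.Ioo (r i) (s i)) = ⋃ j, Set.Ioo (u j) (v j)) :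
    Subgroup.closure (⋃ i, {g | InF (r i) (s i) g}) =
      Subgroup.closure (⋃ j, {g : Equiv.Perm ℝ | InF (u j) (v j) g}) := by
  apply le_antisymm
  · exact closure_le_closure r s u v hr hs hu hv hrs hcover.le
  · exact closure_le_closure u v r s hu hv hr hs huv hcover.ge

end
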